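/- Let α be an infinite cardinal, let G be an α-pseudocompact abelian topological group and suppose G = ⋃_{n∈ℕ} A_n where each A_n is a subgroup of G. Then there exist n ∈ ℕ and N ∈ Λ_α(G) such that A_n ∩ N is G_α-dense in N. -/

import Mathlib

/-!
Suppose no `A n ∩ N` is `G_α`-dense in any `N ∈ Λ_α(G)`. Every `G_α`-set containing `0`
contains a subgroup cut out by at most `α` continuous real functions (one Birkhoff–Kakutani
pseudometric for each open set), and such subgroups belong to `Λ_α(G)`. So a coset `x + N` of
such a subgroup that meets `A n` contains a smaller coset missing `A n`: take a `G_α`-set `T`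
meeting `N` but not `A n ∩ N`, a point `t ∈ T ∩ N`, and a new subgroup inside `(T - t) ∩ N`.
Iterating gives a decreasing sequence of cosets, the `n`-th missing `A n`. Together they are cut
out by `ℵ₀ · α = α` functions, so by `α`-pseudocompactness their intersection is nonempty; a
point of it lies in no `A n`.
-/

open Cardinal Set Function Topology Pointwise

universe u

/-- A `G_α`-set: an intersection of at most `α` many open sets. -/
def IsGAlphaSet {X : Type u} [TopologicalSpace X] (α : Cardinal.{u}) (S : Set X) : Prop :=
  ∃ 𝒰 : Set (Set X), (∀ U ∈ 𝒰, IsOpen U) ∧ #𝒰 ≤ α ∧ S = ⋂₀ 𝒰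

/-- A subset is `G_α`-dense if it meets every nonempty `G_α`-set. -/
def IsGAlphaDense {X : Type u} [TopologicalSpace X] (α : Cardinal.{u}) (D : Set X) : Prop :=
  ∀ S : Set X, IsGAlphaSet α S → S.Nonempty → (D ∩ S).Nonempty

/-- `α`-pseudocompact: every continuous map to `ℝ^α` has compact range. -/
def IsAlphaPseudocompact (α : Cardinal.{u}) (X : Type u) [TopologicalSpace X] : Prop :=
  ∀ f : X → (α.out → ℝ), Continuous f → IsCompact (Set.range f)

/-- The topological weight: least cardinality of a basis. -/
noncomputable def tweight (X : Type u) [TopologicalSpace X] : Cardinal.{u} :=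
  sInf {c : Cardinal.{u} | ∃ B : Set (Set X), TopologicalSpace.IsTopologicalBasis B ∧ #B = c}

/-- The pseudocharacter: sup over points of the least cardinality of a family of
neighborhoods intersecting in that point. -/
noncomputable def pseudochar (X : Type u) [TopologicalSpace X] : Cardinal.{u} :=
  ⨆ x : X, sInf {c : Cardinal.{u} |
    ∃ 𝒰 : Set (Set X), (∀ U ∈ 𝒰, U ∈ nhds x) ∧ ⋂₀ 𝒰 = {x} ∧ #𝒰 = c}

/-- `s_α`-extremal: no proper dense `α`-pseudocompact subgroup. -/
def IsSAlphaExtremal (α : Cardinal.{u}) (G : Type u) [AddCommGroup G] [TopologicalSpace G] :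
    Prop :=
  ¬ ∃ D : AddSubgroup G, D ≠ ⊤ ∧ Dense (D : Set G) ∧ IsAlphaPseudocompact α D

/-- `r_α`-extremal: no strictly finer `α`-pseudocompact group topology. -/
def IsRAlphaExtremal (α : Cardinal.{u}) (G : Type u) [AddCommGroup G] [t : TopologicalSpace G] :
    Prop :=
  ¬ ∃ t' : TopologicalSpace G, t' < t ∧ @IsTopologicalAddGroup G t' _ ∧
    @IsAlphaPseudocompact α G t'

/-- A divisible abelian group. -/
def IsDivisibleGroup (A : Type u) [AddCommGroup A] : Prop :=
  ∀ a : A, ∀ n : ℕ, 0 < n → ∃ b : A, n • b = a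

/-- The free rank `r₀` of an abelian group. -/
noncomputable def freeRank (A : Type u) [AddCommGroup A] : Cardinal.{u} :=
  Module.rank ℤ A

/-- `d_α`-extremal: all quotients by dense `α`-pseudocompact subgroups are divisible. -/
def IsDAlphaExtremal (α : Cardinal.{u}) (G : Type u) [AddCommGroup G] [TopologicalSpace G] :
    Prop :=
  ∀ D : AddSubgroup G, Dense (D : Set G) → IsAlphaPseudocompact α D →
    IsDivisibleGroup (G ⧸ D)

/-- `c_α`-extremal: all quotients by dense `α`-pseudocompact subgroups have free rank `< 2^α`. -/
def IsCAlphaExtremal (α : Cardinal.{u}) (G : Type u) [AddCommGroup G] [TopologicalSpace G] :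
    Prop :=
  ∀ D : AddSubgroup G, Dense (D : Set G) → IsAlphaPseudocompact α D →
    freeRank (G ⧸ D) < 2 ^ α

/-- `α`-extremal: both `d_α`- and `c_α`-extremal. -/
def IsAlphaExtremal (α : Cardinal.{u}) (G : Type u) [AddCommGroup G] [TopologicalSpace G] :
    Prop :=
  IsDAlphaExtremal α G ∧ IsCAlphaExtremal α G

/-- The homomorphism `x ↦ m • x` of an abelian group. -/
def nsmulHom (m : ℕ) (G : Type u) [AddCommGroup G] : G →+ G :=
  AddMonoidHom.mk' (fun x => m • x) (fun a b => smul_add m a b)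

/-- `α`-singular: `w(mG) ≤ α` for some positive integer `m`. -/
def IsAlphaSingular (α : Cardinal.{u}) (G : Type u) [AddCommGroup G] [TopologicalSpace G] :
    Prop :=
  ∃ m : ℕ, 0 < m ∧ tweight ((nsmulHom m G).range) ≤ α

/-- `Λ_α(G)`: the closed subgroups of the abelian group `G` which are `G_α`-sets. -/
def LambdaAlphaAdd (α : Cardinal.{u}) (G : Type u) [AddCommGroup G] [TopologicalSpace G] :
    Set (AddSubgroup G) :=
  {N | IsClosed (N : Set G) ∧ IsGAlphaSet α (N : Set G)}

/-- The `P_α`-topology: the topology generated by the `G_α`-sets. -/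
def PAlphaTop (α : Cardinal.{u}) (X : Type u) (t : TopologicalSpace X) : TopologicalSpace X :=
  TopologicalSpace.generateFrom {S : Set X | @IsGAlphaSet X t α S}

/-- The Bohr topology on an abelian group: the initial topology of all homomorphisms
to the circle group `𝕋 = ℝ/ℤ`. -/
noncomputable def bohrTopology (G : Type u) [AddCommGroup G] : TopologicalSpace G :=
  ⨅ h : G →+ AddCircle (1 : ℝ), TopologicalSpace.induced h inferInstance

open Filter Uniformity
open scoped SetRel

section GAlphaSets

variable {X : Type u} [TopologicalSpace X] {α : Cardinal.{u}}

theorem IsGAlphaSet.preimage {Y : Type u} [TopologicalSpace Y] {f : X → Y} (hf : Continuous f)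
    {s : Set Y} (hs : IsGAlphaSet α s) : IsGAlphaSet α (f ⁻¹' s) := by
  obtain ⟨𝒰, hopen, hcard, rfl⟩ := hs
  refine ⟨Set.preimage f '' 𝒰, ?_, mk_image_le.trans hcard,
    by rw [sInter_image, preimage_sInter]⟩
  rintro _ ⟨U, hU, rfl⟩
  exact (hopen U hU).preimage hf

theorem IsGAlphaSet.inter (hα : ℵ₀ ≤ α) {s t : Set X} (hs : IsGAlphaSet α s)
    (ht : IsGAlphaSet α t) : IsGAlphaSet α (s ∩ t) := by
  obtain ⟨𝒰, hU, hU_card, rfl⟩ := hs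
  obtain ⟨𝒱, hV, hV_card, rfl⟩ := ht
  refine ⟨𝒰 ∪ 𝒱, fun W hW => hW.elim (hU W) (hV W), ?_, (sInter_union 𝒰 𝒱).symm⟩
  calc #(𝒰 ∪ 𝒱 : Set (Set X)) ≤ #𝒰 + #𝒱 := mk_union_le 𝒰 𝒱
    _ ≤ α + α := add_le_add hU_card hV_card
    _ = α := add_eq_self hα

theorem IsGAlphaSet.iInter (hα : ℵ₀ ≤ α) {ι : Type u} (hι : #ι ≤ α) {s : ι → Set X}
    (hs : ∀ i, IsGAlphaSet α (s i)) : IsGAlphaSet α (⋂ i, s i) := by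
  choose 𝒰 hopen hcard hs_eq using hs
  refine ⟨⋃ i, 𝒰 i, ?_, ?_, by rw [sInter_iUnion]; exact iInter_congr hs_eq⟩
  · simp only [mem_iUnion]
    rintro U ⟨i, hU⟩
    exact hopen i U hU
  · calc #(⋃ i, 𝒰 i) ≤ #ι * ⨆ i, #(𝒰 i) := mk_iUnion_le 𝒰
      _ ≤ α * α := mul_le_mul' hι (ciSup_le' hcard)
      _ = α := mul_eq_self hα

theorem IsGδ.isGAlphaSet (hα : ℵ₀ ≤ α) {s : Set X} (hs : IsGδ s) : IsGAlphaSet α s := by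
  obtain ⟨𝒰, hopen, hcount, rfl⟩ := hs
  exact ⟨𝒰, hopen, hcount.le_aleph0.trans hα, rfl⟩

theorem IsGAlphaSet.exists_eq_preimage_val {p : X → Prop} {S : Set (Subtype p)}
    (hS : IsGAlphaSet α S) : ∃ T : Set X, IsGAlphaSet α T ∧ S = Subtype.val ⁻¹' T := by
  obtain ⟨𝒰, hopen, hcard, rfl⟩ := hS
  choose O hO hOU using fun U : 𝒰 => isOpen_induced_iff.1 (hopen U U.2)
  refine ⟨⋂ U, O U, ⟨range O, forall_mem_range.2 hO, mk_range_le.trans hcard,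
    (sInter_range O).symm⟩, ?_⟩
  rw [preimage_iInter, sInter_eq_iInter]
  exact iInter_congr fun U => (hOU U).symm

end GAlphaSets

section ZeroSets

variable {X : Type u} [TopologicalSpace X] {α : Cardinal.{u}}

def IsAlphaZeroSet (α : Cardinal.{u}) (S : Set X) : Prop :=
  ∃ (ι : Type u) (f : X → ι → ℝ), #ι ≤ α ∧ Continuous f ∧ S = f ⁻¹' {0}

theorem isAlphaZeroSet_univ : IsAlphaZeroSet α (univ : Set X) :=
  ⟨PEmpty, fun _ => 0, by simp, continuous_const, (preimage_const_of_mem rfl).symm⟩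

theorem IsAlphaZeroSet.preimage {Y : Type u} [TopologicalSpace Y] {g : Y → X}
    (hg : Continuous g) {S : Set X} (hS : IsAlphaZeroSet α S) :
    IsAlphaZeroSet α (g ⁻¹' S) := by
  obtain ⟨ι, f, hι, hf, rfl⟩ := hS
  exact ⟨ι, f ∘ g, hι, hf.comp hg, rfl⟩

theorem IsAlphaZeroSet.isClosed {S : Set X} (hS : IsAlphaZeroSet α S) : IsClosed S := by
  obtain ⟨ι, f, -, hf, rfl⟩ := hS
  exact isClosed_singleton.preimage hf

theorem IsAlphaZeroSet.isGAlphaSet (hα : ℵ₀ ≤ α) {S : Set X} (hS : IsAlphaZeroSet α S) :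
    IsGAlphaSet α S := by
  obtain ⟨ι, f, hι, hf, rfl⟩ := hS
  have hcoord : f ⁻¹' {0} = ⋂ i, (fun x => f x i) ⁻¹' {0} := by
    ext x
    simp [funext_iff]
  rw [hcoord]
  exact IsGAlphaSet.iInter hα hι fun i =>
    ((isClosed_singleton.isGδ).preimage ((continuous_apply i).comp hf)).isGAlphaSet hα

theorem IsAlphaPseudocompact.isCompact_range (hX : IsAlphaPseudocompact α X) {ι : Type u}
    (hι : #ι ≤ α) {f : X → ι → ℝ} (hf : Continuous f) : IsCompact (range f) := by
  obtain ⟨e⟩ : Nonempty (ι ↪ α.out) := by rwa [← Cardinal.le_def, mk_out]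
  let F : X → α.out → ℝ := fun x => extend e (f x) 0
  have hF : Continuous F := continuous_pi fun j => by
    by_cases h : ∃ i, e i = j
    · obtain ⟨i, rfl⟩ := h
      simp only [F, e.injective.extend_apply]
      exact (continuous_apply i).comp hf
    · simpa only [F, extend_apply' _ _ _ h] using continuous_const
  have hrange : range f = (fun p => p ∘ e) '' range F := by
    rw [← range_comp]
    congr
    funext x
    exact (extend_comp e.injective _ _).symm
  rw [hrange]
  exact (hX F hF).image (continuous_pi fun i => continuous_apply (e i))

theorem IsAlphaPseudocompact.nonempty_iInter_of_antitone (hα : ℵ₀ ≤ α)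
    (hX : IsAlphaPseudocompact α X) {C : ℕ → Set X} (hC : ∀ k, IsAlphaZeroSet α (C k))
    (hanti : Antitone C) (hne : ∀ k, (C k).Nonempty) : (⋂ k, C k).Nonempty := by
  choose ι f hι hf hCf using hC
  have hcard : #(Σ k, ι k) ≤ α :=
    calc #(Σ k, ι k) ≤ lift #ℕ * ⨆ k, #(ι k) := mk_sigma ι ▸ sum_le_lift_mk_mul_iSup _
      _ ≤ α * α := mul_le_mul' (by simpa using hα) (ciSup_le' hι)
      _ = α := mul_eq_self hα
  let Φ : X → (Σ k, ι k) → ℝ := fun x p => f p.1 x p.2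
  let Z : ℕ → Set ((Σ k, ι k) → ℝ) := fun k => ⋂ i, {z | z ⟨k, i⟩ = 0}
  have hΦ : ∀ x k, Φ x ∈ Z k ↔ x ∈ C k := fun x k => by
    simp [Φ, Z, hCf k, funext_iff]
  have hZ : ∀ k, IsClosed (Z k) := fun k =>
    isClosed_iInter fun i =>
      isClosed_eq (continuous_apply (⟨k, i⟩ : Σ k, ι k)) continuous_const
  have hK : IsCompact (range Φ) :=
    hX.isCompact_range hcard (continuous_pi fun p => (continuous_apply p.2).comp (hf p.1))
  have hfin : ∀ u : Finset ℕ, (range Φ ∩ ⋂ k ∈ u, Z k).Nonempty := by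
    intro u
    obtain ⟨x, hx⟩ := hne (u.sup id)
    exact ⟨Φ x, mem_range_self x, mem_iInter₂.2 fun k hk =>
      (hΦ x k).2 (hanti (Finset.le_sup (f := id) hk) hx)⟩
  obtain ⟨_, ⟨x, rfl⟩, hx⟩ := hK.inter_iInter_nonempty Z hZ hfin
  exact ⟨x, mem_iInter.2 fun k => (hΦ x k).1 (mem_iInter.1 hx k)⟩

end ZeroSets

theorem UniformSpace.exists_continuous_eq_zero_iff_mem_ker {X : Type*} [UniformSpace X]
    [(𝓤 X).IsCountablyGenerated] (x₀ : X) :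
    ∃ d : X → ℝ, Continuous d ∧ ∀ x, d x = 0 ↔ (x, x₀) ∈ (𝓤 X).ker := by
  let := UniformSpace.pseudoMetricSpace X
  exact ⟨fun x => dist x x₀, continuous_id.dist continuous_const,
    fun x => Metric.inseparable_iff.symm.trans inseparable_iff_ker_uniformity⟩

theorem exists_uniformSpace_uniformity_eq_iInf_principal {X : Type*} {V : ℕ → SetRel X X}
    (hrefl : ∀ k x, (x, x) ∈ V k) (hsymm : ∀ k, Prod.swap ⁻¹' V k ⊆ V k)
    (hcomp : ∀ k, V (k + 1) ○ V (k + 1) ⊆ V k) :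
    ∃ u : UniformSpace X, 𝓤[u] = ⨅ k, 𝓟 (V k) := by
  have hanti : Antitone V := antitone_nat_of_succ_le fun k ⟨x, y⟩ hxy =>
    hcomp k ⟨y, hxy, hrefl (k + 1) y⟩
  have hB := hasBasis_iInf_principal hanti.directed_ge
  refine ⟨.ofCore (.mk' _ ?_ ?_ ?_), rfl⟩
  · intro r hr x
    obtain ⟨k, -, hk⟩ := hB.mem_iff.1 hr
    exact hk (hrefl k x)
  · intro r hr
    obtain ⟨k, -, hk⟩ := hB.mem_iff.1 hr
    exact mem_of_superset (hB.mem_of_mem trivial) fun p hp => hk (hsymm k hp)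
  · intro r hr
    obtain ⟨k, -, hk⟩ := hB.mem_iff.1 hr
    exact ⟨V (k + 1), hB.mem_of_mem trivial, (hcomp k).trans hk⟩

section TopologicalAddGroup

variable {G : Type*} [AddGroup G] [TopologicalSpace G] [IsTopologicalAddGroup G]

theorem exists_nhds_zero_chain {U : Set G} (hU : U ∈ 𝓝 (0 : G)) :
    ∃ W : ℕ → Set G, (∀ k, W k ∈ 𝓝 (0 : G)) ∧ (∀ k, ∀ x ∈ W k, -x ∈ W k) ∧
      (∀ k, ∀ x ∈ W (k + 1), ∀ y ∈ W (k + 1), x + y ∈ W k) ∧ W 0 ⊆ U := by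
  have half : ∀ V ∈ 𝓝 (0 : G), ∃ W ∈ 𝓝 (0 : G), (∀ x ∈ W, -x ∈ W) ∧
      ∀ x ∈ W, ∀ y ∈ W, x + y ∈ V := by
    intro V hV
    obtain ⟨W, hW, hWV⟩ := exists_nhds_zero_half hV
    exact ⟨W ∩ -W, inter_mem hW (neg_mem_nhds_zero G hW),
      fun x hx => ⟨hx.2, by simpa using hx.1⟩, fun x hx y hy => hWV x hx.1 y hy.1⟩
  choose! h hh_nhds hh_neg hh_add using half
  have hiter : ∀ k, h^[k] U ∈ 𝓝 (0 : G) := by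
    intro k
    induction k with
    | zero => exact hU
    | succ k ih => rw [iterate_succ_apply']; exact hh_nhds _ ih
  refine ⟨fun k => h (h^[k] U), fun k => hh_nhds _ (hiter k), fun k => hh_neg _ (hiter k),
    fun k => ?_, ?_⟩
  · simpa only [iterate_succ_apply'] using hh_add _ (hiter (k + 1))
  · intro x hx
    simpa using hh_add U hU x hx 0 (mem_of_mem_nhds (hh_nhds U hU))

theorem exists_addSubgroup_eq_preimage_zero_subset {U : Set G} (hU : U ∈ 𝓝 (0 : G)) :
    ∃ (H : AddSubgroup G) (d : G → ℝ), Continuous d ∧ (H : Set G) = d ⁻¹' {0} ∧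
      (H : Set G) ⊆ U := by
  obtain ⟨W, hW, hW_neg, hW_add, hWU⟩ := exists_nhds_zero_chain hU
  have hW0 : ∀ k, (0 : G) ∈ W k := fun k => mem_of_mem_nhds (hW k)
  have hW_neg_iff : ∀ k x, -x ∈ W k ↔ x ∈ W k :=
    fun k x => ⟨fun hx => by simpa using hW_neg k _ hx, hW_neg k x⟩
  let H : AddSubgroup G :=
    { carrier := ⋂ k, W k
      zero_mem' := mem_iInter.2 hW0
      add_mem' := fun ha hb => mem_iInter.2 fun k =>
        hW_add k _ (mem_iInter.1 ha _) _ (mem_iInter.1 hb _)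
      neg_mem' := fun ha => mem_iInter.2 fun k => hW_neg k _ (mem_iInter.1 ha k) }
  -- entourages of the right uniformity of the coarser group topology with basis `W k`
  let V : ℕ → SetRel G G := fun k => {p | p.2 - p.1 ∈ W k}
  obtain ⟨u, hu⟩ := exists_uniformSpace_uniformity_eq_iInf_principal (V := V)
    (fun k x => by simpa [V] using hW0 k)
    (fun k p hp => by simpa [V] using hW_neg k _ hp)
    (fun k ⟨x, z⟩ ⟨y, hxy, hyz⟩ => by simpa [V] using hW_add k _ hyz _ hxy)
  have : (𝓤[u]).IsCountablyGenerated := hu ▸ inferInstance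
  obtain ⟨d, hd, hd0⟩ := @UniformSpace.exists_continuous_eq_zero_iff_mem_ker G u this 0
  have hτ : ‹TopologicalSpace G› ≤ u.toTopologicalSpace := by
    rw [le_iff_nhds]
    intro x
    rw [@nhds_eq_comap_uniformity G u, hu, comap_iInf]
    refine le_iInf fun k => ?_
    rw [comap_principal, le_principal_iff]
    exact (continuous_id.sub continuous_const).continuousAt.preimage_mem_nhds
      (by simpa using hW k)
  refine ⟨H, d, continuous_le_dom hτ hd, ?_, fun x hx => hWU (mem_iInter.1 hx 0)⟩
  ext x
  simp [H, V, hd0, hu, ker_principal, hW_neg_iff]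

end TopologicalAddGroup

section AlphaZeroCosets

variable {α : Cardinal.{u}} {G : Type u} [TopologicalSpace G]

theorem IsGAlphaSet.exists_addSubgroup_isAlphaZeroSet_subset [AddGroup G]
    [IsTopologicalAddGroup G] {S : Set G} (hS : IsGAlphaSet α S) (h0 : (0 : G) ∈ S) :
    ∃ N : AddSubgroup G, IsAlphaZeroSet α (N : Set G) ∧ (N : Set G) ⊆ S := by
  obtain ⟨𝒰, hopen, hcard, rfl⟩ := hS
  choose H d hd hHd hHU using fun U : 𝒰 =>
    exists_addSubgroup_eq_preimage_zero_subset ((hopen U U.2).mem_nhds (h0 U U.2))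
  refine ⟨⨅ U, H U, ⟨𝒰, fun x U => d U x, hcard, continuous_pi hd, ?_⟩, ?_⟩
  · ext x
    simp [AddSubgroup.coe_iInf, hHd, funext_iff]
  · intro x hx U hU
    exact hHU ⟨U, hU⟩ (AddSubgroup.mem_iInf.1 hx _)

def IsAlphaZeroCoset [AddGroup G] (α : Cardinal.{u}) (C : Set G) : Prop :=
  ∃ (x : G) (N : AddSubgroup G), IsAlphaZeroSet α (N : Set G) ∧ C = x +ᵥ (N : Set G)

theorem isAlphaZeroCoset_univ [AddGroup G] : IsAlphaZeroCoset α (univ : Set G) :=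
  ⟨0, ⊤, by simpa using isAlphaZeroSet_univ, by simp⟩

theorem IsAlphaZeroCoset.nonempty [AddGroup G] {C : Set G} (hC : IsAlphaZeroCoset α C) :
    C.Nonempty := by
  obtain ⟨x, N, -, rfl⟩ := hC
  exact ⟨x, (mem_leftAddCoset_iff x).2 (by simp)⟩

theorem IsAlphaZeroCoset.isAlphaZeroSet [AddGroup G] [IsTopologicalAddGroup G] {C : Set G}
    (hC : IsAlphaZeroCoset α C) : IsAlphaZeroSet α C := by
  obtain ⟨x, N, hN, rfl⟩ := hC
  have hcoset : x +ᵥ (N : Set G) = (fun y => -x + y) ⁻¹' N := by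
    ext y
    exact mem_leftAddCoset_iff x
  rw [hcoset]
  exact hN.preimage (continuous_const.add continuous_id)

theorem IsAlphaZeroCoset.exists_subset_disjoint [AddCommGroup G] [IsTopologicalAddGroup G]
    (hα : ℵ₀ ≤ α) {D : AddSubgroup G}
    (hD : ∀ N ∈ LambdaAlphaAdd α G, ¬IsGAlphaDense α {x : ↥N | (x : G) ∈ D}) {C : Set G}
    (hC : IsAlphaZeroCoset α C) :
    ∃ C', IsAlphaZeroCoset α C' ∧ C' ⊆ C ∧ Disjoint C' (D : Set G) := by
  obtain ⟨x, N, hN, rfl⟩ := hC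
  by_cases hdisj : Disjoint (x +ᵥ (N : Set G)) D
  · exact ⟨_, ⟨x, N, hN, rfl⟩, subset_rfl, hdisj⟩
  obtain ⟨a, haC, haD⟩ := not_disjoint_iff.1 hdisj
  rw [mem_leftAddCoset_iff] at haC
  have hΛ : N ∈ LambdaAlphaAdd α G := ⟨hN.isClosed, hN.isGAlphaSet hα⟩
  obtain ⟨S, hS, ⟨s, hs⟩, hSD⟩ : ∃ S : Set ↥N, IsGAlphaSet α S ∧ S.Nonempty ∧
      {x : ↥N | (x : G) ∈ D} ∩ S = ∅ := by
    simpa [IsGAlphaDense, not_nonempty_iff_eq_empty] using hD N hΛ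
  obtain ⟨T, hT, rfl⟩ := hS.exists_eq_preimage_val
  -- `s + N'` avoids `D`, so the coset `a + s + N'` of `a + N = x + N` does too
  have hT' : IsGAlphaSet α ((fun y => (s : G) + y) ⁻¹' T ∩ N) :=
    (hT.preimage (continuous_const.add continuous_id)).inter hα hΛ.2
  obtain ⟨N', hN', hN'T⟩ :=
    hT'.exists_addSubgroup_isAlphaZeroSet_subset ⟨by simpa using hs, N.zero_mem⟩
  refine ⟨(a + s) +ᵥ (N' : Set G), ⟨_, N', hN', rfl⟩, fun y hy => ?_, ?_⟩
  · rw [mem_leftAddCoset_iff] at hy ⊢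
    have hsplit : -x + y = (-x + a) + s + (-(a + s) + y) := by abel
    rw [hsplit]
    exact add_mem (add_mem haC s.2) (hN'T hy).2
  · refine disjoint_left.2 fun y hy hyD => ?_
    rw [mem_leftAddCoset_iff] at hy
    obtain ⟨hyT, hyN⟩ := hN'T hy
    have hshift : (s : G) + (-(a + s) + y) = -a + y := by abel
    rw [mem_preimage, hshift] at hyT
    have hmem : (⟨-a + y, hshift ▸ add_mem s.2 hyN⟩ : ↥N) ∈
        {x : ↥N | (x : G) ∈ D} ∩ Subtype.val ⁻¹' T :=
      ⟨add_mem (neg_mem haD) hyD, hyT⟩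
    rw [hSD] at hmem
    exact hmem

end AlphaZeroCosets

theorem statement_12_general (α : Cardinal.{u}) (hα : ℵ₀ ≤ α) (G : Type u) [AddCommGroup G]
    [TopologicalSpace G] [IsTopologicalAddGroup G]
    (hG : IsAlphaPseudocompact α G) (A : ℕ → AddSubgroup G)
    (hA : ∀ x : G, ∃ n : ℕ, x ∈ A n) :
    ∃ n : ℕ, ∃ N ∈ LambdaAlphaAdd α G,
      IsGAlphaDense α {x : ↥N | (x : G) ∈ A n} := by
  by_contra! hnot
  choose! shrink hshrink hshrink_sub hshrink_disj using
    fun n (C : Set G) (hC : IsAlphaZeroCoset α C) => hC.exists_subset_disjoint hα (hnot n)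
  -- `C (n + 1)` is a coset inside `C n` missing `A n`
  let C : ℕ → Set G := fun k => Nat.rec univ (fun n Cn => shrink n Cn) k
  have hC : ∀ k, IsAlphaZeroCoset α (C k) := fun k =>
    Nat.rec isAlphaZeroCoset_univ (fun n ih => hshrink n _ ih) k
  obtain ⟨x, hx⟩ := hG.nonempty_iInter_of_antitone hα (fun k => (hC k).isAlphaZeroSet)
    (antitone_nat_of_succ_le fun k => hshrink_sub k _ (hC k)) fun k => (hC k).nonempty
  obtain ⟨n, hn⟩ := hA x
  exact disjoint_left.1 (hshrink_disj n _ (hC n)) (mem_iInter.1 hx (n + 1)) hn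

/-- if an `α`-pseudocompact abelian group `G` is a countable union of
subgroups `A n`, then some `A n ∩ N` is `G_α`-dense in some `N ∈ Λ_α(G)`. -/
theorem statement_12 (α : Cardinal.{u}) (hα : ℵ₀ ≤ α) (G : Type u) [AddCommGroup G]
    [TopologicalSpace G] [IsTopologicalAddGroup G] [T2Space G]
    (hG : IsAlphaPseudocompact α G) (A : ℕ → AddSubgroup G)
    (hA : ∀ x : G, ∃ n : ℕ, x ∈ A n) :
    ∃ n : ℕ, ∃ N ∈ LambdaAlphaAdd α G,
      IsGAlphaDense α {x : ↥N | (x : G) ∈ A n} :=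
  statement_12_general α hα G hG A hA
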